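/- arXiv:1712.00496 — 2 statements merged into one kernel-verified Lean document; each statement's English description precedes it below -/
import Mathlib

section
/- In the Baumslag–Solitar group BS(1,n) ≅ ℤ[1/n] ⋊ ℤ (with ℤ acting by multiplication by n), the commensurator of the subgroup generated by the element 1/n of ℤ[1/n] is the whole group. -/
open IsLocalization

/-- The ring `ℤ[1/n]`, realized as the localization of `ℤ` away from `n`. -/
abbrev ZInvN (n : ℤ) := Localization.Away n

/-- Multiplication by `n` as a unit of `ℤ[1/n]`. -/
noncomputable def mulByN (n : ℤ) : (ZInvN n)ˣ :=
  (IsLocalization.Away.algebraMap_isUnit (S := ZInvN n) n).unit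

/-- The action of `ℤ` on the additive group `ℤ[1/n]` where the generator acts by
multiplication by `n`, packaged as a homomorphism to the automorphism group. -/
noncomputable def bsAction (n : ℤ) :
    Multiplicative ℤ →* MulAut (Multiplicative (ZInvN n)) :=
  zpowersHom _ (AddEquiv.toMultiplicative (AddAut.mulLeft (mulByN n)))

/-- The Baumslag–Solitar group `BS(1,n) ≅ ℤ[1/n] ⋊ ℤ`. -/
abbrev BS1n (n : ℤ) := SemidirectProduct (Multiplicative (ZInvN n)) (Multiplicative ℤ) (bsAction n)

/-- The element `1/n ∈ ℤ[1/n] ⊆ BS(1,n)`. -/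
noncomputable def oneOverN (n : ℤ) : BS1n n :=
  SemidirectProduct.inl (Multiplicative.ofAdd (IsLocalization.Away.invSelf (S := ZInvN n) n))

/-!
Elements of the abelian normal subgroup `ℤ[1/n]` centralize `x = 1/n`, and conjugation by the
stable letter `t` sends `x` to `x ^ n`. Since `⟨x ^ m⟩` has finite index in `⟨x⟩` for `m ≠ 0`,
both lie in the commensurator of `⟨x⟩`, and together they generate `BS(1,n)`.
-/

namespace Subgroup

variable {G : Type*} [Group G]

theorem relIndex_zpowers_zpow_ne_zero (g : G) {m : ℤ} (hm : m ≠ 0) :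
    (zpowers (g ^ m)).relIndex (zpowers g) ≠ 0 := by
  rw [← range_zpowersHom g, ← index_comap]
  have hle :
      (AddSubgroup.zmultiples m).toSubgroup ≤ (zpowers (g ^ m)).comap (zpowersHom G g) := by
    rintro _ ⟨k, rfl⟩
    exact ⟨k, (zpow_mul' g k m).symm⟩
  have := index_dvd_of_le hle
  rw [AddSubgroup.index_toSubgroup, Int.index_zmultiples] at this
  exact ne_zero_of_dvd_ne_zero (Int.natAbs_ne_zero.2 hm) this

theorem commensurable_zpowers_zpow (g : G) {m : ℤ} (hm : m ≠ 0) :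
    Commensurable (zpowers (g ^ m)) (zpowers g) := by
  refine ⟨relIndex_zpowers_zpow_ne_zero g hm, ?_⟩
  rw [relIndex_eq_one.2 (zpowers_le.2 (zpow_mem_zpowers g m))]
  exact one_ne_zero

open Pointwise in
theorem toConjAct_smul_zpowers (g h : G) :
    ConjAct.toConjAct g • zpowers h = zpowers (g * h * g⁻¹) :=
  MonoidHom.map_zpowers _ h

theorem mem_commensurator_zpowers_of_conj_eq_zpow {g x : G} {m : ℤ}
    (hm : m ≠ 0) (h : g * x * g⁻¹ = x ^ m) : g ∈ Commensurable.commensurator (zpowers x) := by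
  rw [Commensurable.commensurator_mem_iff, toConjAct_smul_zpowers, h]
  exact commensurable_zpowers_zpow x hm

end Subgroup

namespace SemidirectProduct

theorem inr_eq_inr_ofAdd_one_zpow {N : Type*} [Group N]
    {φ : Multiplicative ℤ →* MulAut N} (k : Multiplicative ℤ) :
    (inr k : N ⋊[φ] Multiplicative ℤ) = inr (Multiplicative.ofAdd 1) ^ Multiplicative.toAdd k := by
  rw [← map_zpow, ← ofAdd_zsmul, smul_eq_mul, mul_one, ofAdd_toAdd]

end SemidirectProduct

open SemidirectProduct

theorem bsAction_ofAdd_one_apply (n : ℤ) (x : ZInvN n) :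
    bsAction n (Multiplicative.ofAdd 1) (Multiplicative.ofAdd x) = Multiplicative.ofAdd x ^ n := by
  have hn : ((mulByN n : (ZInvN n)ˣ) : ZInvN n) = n := by
    simp [mulByN]
  rw [bsAction, zpowersHom_apply, toAdd_ofAdd, zpow_one, ← ofAdd_zsmul, zsmul_eq_mul, ← hn]
  rfl

theorem inr_conj_oneOverN (n : ℤ) :
    inr (Multiplicative.ofAdd 1) * oneOverN n * (inr (Multiplicative.ofAdd 1))⁻¹ =
      oneOverN n ^ n := by
  rw [oneOverN, ← map_inv, ← inl_aut, bsAction_ofAdd_one_apply, map_zpow]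

theorem inl_conj_oneOverN (n : ℤ) (x : Multiplicative (ZInvN n)) :
    inl x * oneOverN n * (inl x)⁻¹ = oneOverN n := by
  rw [oneOverN, ← map_inv, ← map_mul, ← map_mul, mul_inv_cancel_comm]

/-- In `BS(1,n) ≅ ℤ[1/n] ⋊ ℤ`, the commensurator of the cyclic subgroup generated
by the element `1/n` of `ℤ[1/n]` is the whole group. -/
theorem commensurator_oneOverN_eq_top (n : ℤ) (hn : 0 < n) :
    Subgroup.Commensurable.commensurator (Subgroup.zpowers (oneOverN n)) = ⊤ := by
  rw [eq_top_iff]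
  rintro g -
  rw [← inl_left_mul_inr_right g, inr_eq_inr_ofAdd_one_zpow]
  refine Subgroup.mul_mem _ ?_ (Subgroup.zpow_mem _ ?_ _)
  · exact Subgroup.mem_commensurator_zpowers_of_conj_eq_zpow one_ne_zero
      ((inl_conj_oneOverN n _).trans (zpow_one _).symm)
  · exact Subgroup.mem_commensurator_zpowers_of_conj_eq_zpow hn.ne' (inr_conj_oneOverN n)
end

section
/- Let G be a group, Q a quotient of G by a normal subgroup N, and suppose g ∈ G has image of infinite order in Q. If H = ⟨g⟩ and the commensurator of ⟨image of g⟩ in Q equals the normalizer of image of g in Q, then the preimage in G of the normalizer N_Q(image of g) contains the commensurator N_G[H]. -/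
/-! A homomorphism keeps finite relative indices finite and carries conjugates to conjugates, so it
maps the commensurator of `H` into the commensurator of the image of `H`; by hypothesis the latter
is the normalizer when `H = ⟨g⟩`. -/

open scoped Pointwise

namespace Subgroup

variable {G Q : Type*} [Group G] [Group Q]

theorem relIndex_map_map_ne_zero (f : G →* Q) {H K : Subgroup G} (h : H.relIndex K ≠ 0) :
    (H.map f).relIndex (K.map f) ≠ 0 := by
  rw [← relIndex_comap]
  exact mt (relIndex_eq_zero_of_le_left (le_comap_map f H)) h

theorem Commensurable.map (f : G →* Q) {H K : Subgroup G} (h : Commensurable H K) :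
    Commensurable (H.map f) (K.map f) :=
  ⟨relIndex_map_map_ne_zero f h.1, relIndex_map_map_ne_zero f h.2⟩

theorem map_toConjAct_smul (f : G →* Q) (x : G) (H : Subgroup G) :
    (ConjAct.toConjAct x • H).map f = ConjAct.toConjAct (f x) • H.map f := by
  ext y
  simp only [mem_map, mem_smul_pointwise_iff_exists, ConjAct.toConjAct_smul]
  constructor
  · rintro ⟨_, ⟨h, hh, rfl⟩, rfl⟩
    exact ⟨f h, ⟨h, hh, rfl⟩, by simp⟩
  · rintro ⟨_, ⟨h, hh, rfl⟩, rfl⟩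
    exact ⟨_, ⟨h, hh, rfl⟩, by simp⟩

theorem Commensurable.commensurator_le_comap_commensurator_map (f : G →* Q) (H : Subgroup G) :
    commensurator H ≤ (commensurator (H.map f)).comap f := fun x hx => by
  rw [mem_comap, commensurator_mem_iff, ← map_toConjAct_smul]
  exact Commensurable.map f hx

end Subgroup

theorem commensurator_le_comap_normalizer_general {G Q : Type*} [Group G] [Group Q]
    (π : G →* Q) (g : G)
    (hQ : Subgroup.Commensurable.commensurator (Subgroup.zpowers (π g)) =
      Subgroup.normalizer (Subgroup.zpowers (π g) : Set Q)) :
    Subgroup.Commensurable.commensurator (Subgroup.zpowers g) ≤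
      (Subgroup.normalizer (Subgroup.zpowers (π g) : Set Q)).comap π := by
  rw [← hQ, ← MonoidHom.map_zpowers]
  exact Subgroup.Commensurable.commensurator_le_comap_commensurator_map π _

/-- Let `Q` be a quotient of `G` via the surjection `π`, and let `g ∈ G` have image
of infinite order in `Q`. If the commensurator of `⟨π g⟩` in `Q` equals the
normalizer of `⟨π g⟩` in `Q`, then the preimage in `G` of the normalizer
`N_Q(π g)` contains the commensurator `N_G[⟨g⟩]`. -/
theorem commensurator_le_comap_normalizer {G Q : Type*} [Group G] [Group Q]
    (π : G →* Q) (hπ : Function.Surjective π) (g : G)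
    (hinf : ¬ IsOfFinOrder (π g))
    (hQ : Subgroup.Commensurable.commensurator (Subgroup.zpowers (π g)) =
      Subgroup.normalizer (Subgroup.zpowers (π g) : Set Q)) :
    Subgroup.Commensurable.commensurator (Subgroup.zpowers g) ≤
      (Subgroup.normalizer (Subgroup.zpowers (π g) : Set Q)).comap π :=
  commensurator_le_comap_normalizer_general π g hQ
end
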